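/- Let α ∈ ℝ with 1 < α < 2, let q₀ > 0, and let S ⊆ ℂ be a closed set consisting only of isolated points with S ⊆ {z ∈ ℂ : Re z ≥ q₀}. Then there is no function h : ℂ → ℂ that is complex-differentiable at every point of ℂ ∖ S and satisfies h(η) = (-η)^{1/α} for every η ∈ ℂ with Re η < 0, where w^{1/α} denotes the principal branch of the complex power. -/

import Mathlib

/-!
On the disk `ball 0 q₀`, which misses `S`, the function `h` is analytic. By the identity theorem
it equals `e^{-πic} z^c` on the upper half-disk and `e^{πic} z^c` on the lower one, where
`c = 1/α`, since `(-z)^c` is one of these on either side of the real axis. Continuing the first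
identity through the right half-disk, which meets both, forces `e^{-πic} = e^{πic}`, i.e.
`c ∈ ℤ`, which is impossible for `0 < c < 1`.
-/

open Complex Set Metric
open scoped Real

theorem AnalyticOnNhd.eqOn_of_preconnected_of_eqOn_inter_open {𝕜 E F : Type*}
    [NontriviallyNormedField 𝕜] [NormedAddCommGroup E] [NormedSpace 𝕜 E] [NormedAddCommGroup F]
    [NormedSpace 𝕜 F] {f g : E → F} {U V : Set E} (hf : AnalyticOnNhd 𝕜 f U)
    (hg : AnalyticOnNhd 𝕜 g U) (hU : IsPreconnected U) (hUo : IsOpen U) (hV : IsOpen V) {z₀ : E}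
    (hz₀ : z₀ ∈ U ∩ V) (hfg : EqOn f g (U ∩ V)) : EqOn f g U :=
  hf.eqOn_of_preconnected_of_eventuallyEq hg hU hz₀.1
    (hfg.eventuallyEq_of_mem ((hUo.inter hV).mem_nhds hz₀))

namespace Complex

theorem log_neg_of_im_pos {z : ℂ} (hz : 0 < z.im) : log (-z) = log z - π * I := by
  apply Complex.ext <;> simp [log_re, log_im, arg_neg_eq_arg_sub_pi_of_im_pos hz]

theorem log_neg_of_im_neg {z : ℂ} (hz : z.im < 0) : log (-z) = log z + π * I := by
  apply Complex.ext <;> simp [log_re, log_im, arg_neg_eq_arg_add_pi_of_im_neg hz]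

theorem neg_cpow_of_im_pos {z : ℂ} (hz : 0 < z.im) (c : ℂ) :
    (-z) ^ c = z ^ c * exp (-(π * I * c)) := by
  have hz₀ : z ≠ 0 := by rintro rfl; simp at hz
  rw [cpow_def_of_ne_zero (neg_ne_zero.mpr hz₀), cpow_def_of_ne_zero hz₀, log_neg_of_im_pos hz,
    sub_mul, exp_sub, div_eq_mul_inv, ← exp_neg]

theorem neg_cpow_of_im_neg {z : ℂ} (hz : z.im < 0) (c : ℂ) :
    (-z) ^ c = z ^ c * exp (π * I * c) := by
  have hz₀ : z ≠ 0 := by rintro rfl; simp at hz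
  rw [cpow_def_of_ne_zero (neg_ne_zero.mpr hz₀), cpow_def_of_ne_zero hz₀, log_neg_of_im_neg hz,
    add_mul, exp_add]

theorem exists_int_eq_of_exp_neg_eq_exp {c : ℂ} (h : exp (-(π * I * c)) = exp (π * I * c)) :
    ∃ n : ℤ, c = n := by
  obtain ⟨n, hn⟩ := exp_eq_exp_iff_exists_int.mp h
  refine ⟨-n, mul_left_cancel₀ (by simp : (π : ℂ) * I ≠ 0) ?_⟩
  push_cast
  linear_combination -hn / 2

theorem analyticOnNhd_cpow_mul_const (c a : ℂ) :
    AnalyticOnNhd ℂ (fun z => z ^ c * a) slitPlane := fun _ hz =>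
  (analyticAt_id.cpow analyticAt_const hz).mul analyticAt_const

theorem mk_mem_ball_zero {r a b : ℝ} (ha : |a| < r / 2) (hb : |b| < r / 2) :
    (⟨a, b⟩ : ℂ) ∈ ball (0 : ℂ) r := by
  rw [mem_ball_zero_iff]
  calc ‖(⟨a, b⟩ : ℂ)‖ ≤ |a| + |b| := norm_le_abs_re_add_abs_im _
    _ < r := by linarith

theorem exists_int_eq_of_analyticOnNhd_ball_eq_neg_cpow {r : ℝ} (hr : 0 < r) {c : ℂ}
    {f : ℂ → ℂ} (hf : AnalyticOnNhd ℂ f (ball 0 r))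
    (hfc : ∀ z ∈ ball (0 : ℂ) r, z.re < 0 → f z = (-z) ^ c) : ∃ n : ℤ, c = n := by
  set D := ball (0 : ℂ) r
  set upper := D ∩ {z : ℂ | 0 < z.im}
  set lower := D ∩ {z : ℂ | z.im < 0}
  set right := D ∩ {z : ℂ | 0 < z.re}
  have hleft : IsOpen {z : ℂ | z.re < 0} := isOpen_lt continuous_re continuous_const
  have hupper : IsOpen upper := isOpen_ball.inter (isOpen_lt continuous_const continuous_im)
  have hlower : IsOpen lower := isOpen_ball.inter (isOpen_lt continuous_im continuous_const)
  have hright : IsOpen right := isOpen_ball.inter (isOpen_lt continuous_const continuous_re)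
  have habs : |r / 4| < r / 2 ∧ |-(r / 4)| < r / 2 := by
    rw [abs_neg, abs_of_pos (by positivity)]; constructor <;> linarith
  have hr4 : 0 < r / 4 := by positivity
  have on_upper : EqOn f (fun z => z ^ c * exp (-(π * I * c))) upper := by
    refine (hf.mono inter_subset_left).eqOn_of_preconnected_of_eqOn_inter_open
      ((analyticOnNhd_cpow_mul_const _ _).mono fun z hz => .inr hz.2.ne')
      ((convex_ball _ _).inter (convex_halfSpace_im_gt 0)).isPreconnected hupper hleft
      (z₀ := ⟨-(r / 4), r / 4⟩) ⟨⟨mk_mem_ball_zero habs.2 habs.1, hr4⟩, neg_neg_of_pos hr4⟩ ?_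
    exact fun z hz => (hfc z hz.1.1 hz.2).trans (neg_cpow_of_im_pos hz.1.2 c)
  have on_lower : EqOn f (fun z => z ^ c * exp (π * I * c)) lower := by
    refine (hf.mono inter_subset_left).eqOn_of_preconnected_of_eqOn_inter_open
      ((analyticOnNhd_cpow_mul_const _ _).mono fun z hz => .inr hz.2.ne)
      ((convex_ball _ _).inter (convex_halfSpace_im_lt 0)).isPreconnected hlower hleft
      (z₀ := ⟨-(r / 4), -(r / 4)⟩) ⟨⟨mk_mem_ball_zero habs.2 habs.2, neg_neg_of_pos hr4⟩,
        neg_neg_of_pos hr4⟩ ?_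
    exact fun z hz => (hfc z hz.1.1 hz.2).trans (neg_cpow_of_im_neg hz.1.2 c)
  have on_right : EqOn f (fun z => z ^ c * exp (-(π * I * c))) right :=
    (hf.mono inter_subset_left).eqOn_of_preconnected_of_eqOn_inter_open
      ((analyticOnNhd_cpow_mul_const _ _).mono fun z hz => .inl hz.2)
      ((convex_ball _ _).inter (convex_halfSpace_re_gt 0)).isPreconnected hright hupper
      (z₀ := ⟨r / 4, r / 4⟩)
      ⟨⟨mk_mem_ball_zero habs.1 habs.1, hr4⟩, mk_mem_ball_zero habs.1 habs.1, hr4⟩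
      fun z hz => on_upper hz.2
  set p : ℂ := ⟨r / 4, -(r / 4)⟩
  have hpD : p ∈ D := mk_mem_ball_zero habs.1 habs.2
  have hp : p ^ c ≠ 0 := by
    rw [cpow_def_of_ne_zero fun h => hr4.ne' (congrArg re h)]
    exact exp_ne_zero _
  exact exists_int_eq_of_exp_neg_eq_exp <| mul_left_cancel₀ hp <|
    (on_right ⟨hpD, hr4⟩).symm.trans (on_lower ⟨hpD, neg_neg_of_pos hr4⟩)

end Complex

theorem stmt_3_general (α : ℝ) (hα1 : 1 < α) (q₀ : ℝ) (hq₀ : 0 < q₀)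
    (S : Set ℂ)
    (hSre : S ⊆ {z : ℂ | q₀ ≤ z.re}) :
    ¬ ∃ h : ℂ → ℂ, (∀ z ∉ S, DifferentiableAt ℂ h z) ∧
      (∀ η : ℂ, η.re < 0 → h η = (-η) ^ ((1 / α : ℝ) : ℂ)) := by
  rintro ⟨h, hdiff, hval⟩
  have hball : ∀ z ∈ ball (0 : ℂ) q₀, z ∉ S := fun z hz hzS => by
    have : q₀ ≤ z.re := hSre hzS
    have := re_le_norm z
    rw [mem_ball_zero_iff] at hz
    linarith
  have hana : AnalyticOnNhd ℂ h (ball 0 q₀) :=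
    DifferentiableOn.analyticOnNhd (fun z hz => (hdiff z (hball z hz)).differentiableWithinAt)
      isOpen_ball
  obtain ⟨n, hn⟩ := exists_int_eq_of_analyticOnNhd_ball_eq_neg_cpow hq₀ hana fun z _ => hval z
  have hn' : 1 / α = n := by exact_mod_cast hn
  have hpos : (0 : ℝ) < n := hn' ▸ by positivity
  have hlt : (n : ℝ) < 1 := hn' ▸ (div_lt_one (by linarith)).mpr hα1
  have : (0 : ℤ) < n := by exact_mod_cast hpos
  have : n < (1 : ℤ) := by exact_mod_cast hlt
  omega

/-- Non-continuation fact from the First Step of the proof of Theorem 1: there is no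
function holomorphic outside a closed discrete set `S ⊆ {Re z ≥ q₀}` (with `q₀ > 0`)
agreeing with the principal branch of `(-η)^{1/α}` on the half-plane `{Re η < 0}`. -/
theorem stmt_3 (α : ℝ) (hα1 : 1 < α) (hα2 : α < 2) (q₀ : ℝ) (hq₀ : 0 < q₀)
    (S : Set ℂ) (hSclosed : IsClosed S)
    (hSdisc : ∀ s ∈ S, ∃ U ∈ nhds s, U ∩ S = {s})
    (hSre : S ⊆ {z : ℂ | q₀ ≤ z.re}) :
    ¬ ∃ h : ℂ → ℂ, (∀ z ∉ S, DifferentiableAt ℂ h z) ∧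
      (∀ η : ℂ, η.re < 0 → h η = (-η) ^ ((1 / α : ℝ) : ℂ)) :=
  stmt_3_general α hα1 q₀ hq₀ S hSre
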